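/- arXiv:2102.10667 — 3 statements merged into one kernel-verified Lean document; each statement's English description precedes it below -/
import Mathlib

section
/- Let M be a 2×2 real symmetric positive definite matrix with entries m11, m12, m12, m22, and let b, c be real numbers. Then ((m22 - c)^2 + (b(m22 - c) - c(m12 - b))^2 / det(M)) / m22 ≥ (m12 - b)^2 / m11. -/
/-! With `u = m22 - c` and `v = m12 - b` the numerator `b u - c v` is `m12 u - m22 v`, and
`m11 m22` times the difference of the two sides is the square `m22 (m11 u - m12 v)² / det M`. -/

theorem sq_div_le_of_det_pos {m11 m12 m22 : ℝ} (h11 : 0 < m11) (h22 : 0 < m22)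
    (hdet : 0 < m11 * m22 - m12 ^ 2) (u v : ℝ) :
    v ^ 2 / m11 ≤ (u ^ 2 + (m12 * u - m22 * v) ^ 2 / (m11 * m22 - m12 ^ 2)) / m22 := by
  rw [div_le_div_iff₀ h11 h22, ← sub_nonneg]
  have gap : (u ^ 2 + (m12 * u - m22 * v) ^ 2 / (m11 * m22 - m12 ^ 2)) * m11 - v ^ 2 * m22
      = m22 * (m11 * u - m12 * v) ^ 2 / (m11 * m22 - m12 ^ 2) := by
    rw [add_div' _ _ _ hdet.ne', div_mul_eq_mul_div, div_sub' hdet.ne', div_left_inj' hdet.ne']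
    ring
  rw [gap]
  positivity

theorem stmt0 (m11 m12 m22 b c : ℝ)
    (h11 : 0 < m11) (h22 : 0 < m22)
    (hdet : 0 < m11 * m22 - m12 ^ 2) :
    ((m22 - c) ^ 2 + (b * (m22 - c) - c * (m12 - b)) ^ 2 / (m11 * m22 - m12 ^ 2)) / m22
      ≥ (m12 - b) ^ 2 / m11 := by
  have numerator : b * (m22 - c) - c * (m12 - b) = m12 * (m22 - c) - m22 * (m12 - b) := by ring
  rw [ge_iff_le, numerator]
  exact sq_div_le_of_det_pos h11 h22 hdet (m22 - c) (m12 - b)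
end

section
/- Let M be a 2×2 real symmetric positive definite matrix with entries m11, m12, m12, m22, and let b, c be real numbers. Equality holds in the inequality ((m22 - c)^2 + (b(m22 - c) - c(m12 - b))^2 / det(M)) / m22 ≥ (m12 - b)^2 / m11 if and only if m22 = c + (m12 - b)*m12 / m11. -/
/-!
The difference of the two sides is a perfect square over `m11 * det M > 0`, so it vanishes
exactly when `m11 * (m22 - c) = m12 * (m12 - b)`.
-/

theorem div_sub_div_eq_sq_div_mul_det {m11 m12 m22 b c : ℝ} (h11 : m11 ≠ 0) (h22 : m22 ≠ 0)
    (hdet : m11 * m22 - m12 ^ 2 ≠ 0) :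
    ((m22 - c) ^ 2 + (b * (m22 - c) - c * (m12 - b)) ^ 2 / (m11 * m22 - m12 ^ 2)) / m22
      - (m12 - b) ^ 2 / m11
      = (m11 * (m22 - c) - m12 * (m12 - b)) ^ 2 / (m11 * (m11 * m22 - m12 ^ 2)) := by
  rw [add_div' _ _ _ hdet, div_div, div_sub_div _ _ (mul_ne_zero hdet h22) h11,
    div_eq_div_iff (mul_ne_zero (mul_ne_zero hdet h22) h11) (mul_ne_zero h11 hdet)]
  ring

theorem stmt1 (m11 m12 m22 b c : ℝ)
    (h11 : 0 < m11) (h22 : 0 < m22)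
    (hdet : 0 < m11 * m22 - m12 ^ 2) :
    ((m22 - c) ^ 2 + (b * (m22 - c) - c * (m12 - b)) ^ 2 / (m11 * m22 - m12 ^ 2)) / m22
      = (m12 - b) ^ 2 / m11
    ↔ m22 = c + (m12 - b) * m12 / m11 := by
  rw [← sub_eq_zero, div_sub_div_eq_sq_div_mul_det h11.ne' h22.ne' hdet.ne',
    div_eq_zero_iff, or_iff_left (mul_pos h11 hdet).ne', sq_eq_zero_iff, sub_eq_zero,
    ← sub_eq_iff_eq_add', eq_div_iff h11.ne', mul_comm m12, mul_comm m11]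
end

section
/- Let U(x) = α·x²/2 + ψ(x) with ψ ∈ C^1(R) supported in [-R, R], and suppose 2‖ψ'‖_∞ < α. Let B(x,v) = (v, -U'(x) - v) and let A = [[b + cα, b],[b, c]] with c = 2b > 0. If z1' = (x1', v1'), z2' = (x2', v2') satisfy |x1'| ≥ R+1 or |x2'| ≥ R+1 and moreover ‖ψ'‖_∞ < 1/2, then -⟨B(z1') - B(z2'), z1' - z2'⟩_A ≥ c·κ1·|z1' - z2'|², where κ1 = min(1/2 - ‖ψ'‖_∞, (α - 2‖ψ'‖_∞)/2) > 0. -/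
/-!
With `c = 2b`, `-⟨B z₁ - B z₂, z₁ - z₂⟩_A = b (|Δv|² + α |Δx|² + Δψ' Δx + 2 Δψ' Δv)`.
Since one of the points lies at distance at least `1` from the support `[-R, R]` of `ψ'`,
`ψ'` behaves as if it were `‖ψ'‖_∞`-Lipschitz on that pair: `|Δψ'| ≤ ‖ψ'‖_∞ |Δx|`.
The cross terms are then absorbed by Young's inequality.
-/

lemma abs_sub_le_mul_abs_sub_of_one_add_le_abs {R K : ℝ} {p : ℝ → ℝ}
    (hsupp : ∀ x, R < |x| → p x = 0) (hK : ∀ x, |p x| ≤ K) {x y : ℝ} (hx : R + 1 ≤ |x|) :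
    |p x - p y| ≤ K * |x - y| := by
  have hK0 : 0 ≤ K := (abs_nonneg _).trans (hK 0)
  rw [hsupp x (by linarith), zero_sub, abs_neg]
  rcases le_or_gt |y| R with hy | hy
  · have hxy : 1 ≤ |x - y| := by linarith [abs_sub_abs_le_abs_sub x y]
    calc |p y| ≤ K := hK y
      _ ≤ K * |x - y| := le_mul_of_one_le_right hK0 hxy
  · rw [hsupp y hy, abs_zero]
    positivity

lemma add_sub_mul_sq_le_of_abs_le_mul_abs {K α d w u : ℝ} (hK : 0 ≤ K)
    (hd : |d| ≤ K * |w|) :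
    (1 - K) * u ^ 2 + (α - 2 * K) * w ^ 2 ≤ u ^ 2 + α * w ^ 2 + d * w + 2 * d * u := by
  have hdw : -(K * w ^ 2) ≤ d * w :=
    calc -(K * w ^ 2) = -(K * |w| * |w|) := by rw [mul_assoc, abs_mul_abs_self, sq]
      _ ≤ -(|d| * |w|) := by gcongr
      _ = -|d * w| := by rw [abs_mul]
      _ ≤ d * w := neg_abs_le _
  have hdu : -(K * (w ^ 2 + u ^ 2)) ≤ 2 * d * u :=
    calc -(K * (w ^ 2 + u ^ 2)) ≤ -(2 * (K * |w|) * |u|) := by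
          nlinarith [two_mul_le_add_sq |w| |u|, sq_abs w, sq_abs u]
      _ ≤ -(2 * |d| * |u|) := by gcongr
      _ = -|2 * d * u| := by rw [abs_mul, abs_mul, abs_two]
      _ ≤ 2 * d * u := neg_abs_le _
  linarith

/-- `p = ψ'`, `K = ‖ψ'‖_∞`, `A = [[b + cα, b],[b, c]]` with `c = 2b`, and
`⟨u, w⟩_A = u ⬝ (A w)`. -/
theorem stmt10_general (α R b c K : ℝ) (p : ℝ → ℝ)
    (hb : 0 < b) (hc : c = 2 * b)
    (hsupp : ∀ x : ℝ, R < |x| → p x = 0)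
    (hK : ∀ x : ℝ, |p x| ≤ K)
    (hKα : 2 * K < α) (hKhalf : K < 1 / 2)
    (x1 v1 x2 v2 : ℝ)
    (hfar : R + 1 ≤ |x1| ∨ R + 1 ≤ |x2|) :
    let a : ℝ := b + c * α
    let κ1 : ℝ := min (1 / 2 - K) ((α - 2 * K) / 2)
    -- components of B z1 - B z2
    let u1 : ℝ := v1 - v2
    let u2 : ℝ := -(α * x1 + p x1) - v1 - (-(α * x2 + p x2) - v2)
    -- components of z1 - z2
    let w1 : ℝ := x1 - x2
    let w2 : ℝ := v1 - v2
    0 < κ1 ∧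
    -(u1 * (a * w1 + b * w2) + u2 * (b * w1 + c * w2))
      ≥ c * κ1 * ((x1 - x2) ^ 2 + (v1 - v2) ^ 2) := by
  intro a κ1 u1 u2 w1 w2
  have hK0 : 0 ≤ K := (abs_nonneg _).trans (hK 0)
  refine ⟨lt_min (by linarith) (by linarith), ?_⟩
  have hlip : |p x1 - p x2| ≤ K * |x1 - x2| := by
    rcases hfar with h | h
    · exact abs_sub_le_mul_abs_sub_of_one_add_le_abs hsupp hK h
    · rw [abs_sub_comm, abs_sub_comm x1]
      exact abs_sub_le_mul_abs_sub_of_one_add_le_abs hsupp hK h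
  have hform : -(u1 * (a * w1 + b * w2) + u2 * (b * w1 + c * w2)) =
      b * ((v1 - v2) ^ 2 + α * (x1 - x2) ^ 2 + (p x1 - p x2) * (x1 - x2)
        + 2 * (p x1 - p x2) * (v1 - v2)) := by
    simp only [a, u1, u2, w1, w2, hc]
    ring
  have hκ1 : 2 * κ1 * ((x1 - x2) ^ 2 + (v1 - v2) ^ 2) ≤
      (1 - K) * (v1 - v2) ^ 2 + (α - 2 * K) * (x1 - x2) ^ 2 := by
    nlinarith [min_le_left (1 / 2 - K) ((α - 2 * K) / 2),
      min_le_right (1 / 2 - K) ((α - 2 * K) / 2), sq_nonneg (x1 - x2), sq_nonneg (v1 - v2)]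
  rw [hform, ge_iff_le]
  calc c * κ1 * ((x1 - x2) ^ 2 + (v1 - v2) ^ 2)
      = b * (2 * κ1 * ((x1 - x2) ^ 2 + (v1 - v2) ^ 2)) := by rw [hc]; ring
    _ ≤ b * ((1 - K) * (v1 - v2) ^ 2 + (α - 2 * K) * (x1 - x2) ^ 2) := by gcongr
    _ ≤ _ := mul_le_mul_of_nonneg_left (add_sub_mul_sq_le_of_abs_le_mul_abs hK0 hlip) hb.le

/-- Coercivity of the drift far from the support of the perturbation.
`p = ψ'`, `K = ‖ψ'‖_∞`, `A = [[b + cα, b],[b, c]]` with `c = 2b`, and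
`⟨u, w⟩_A = u ⬝ (A w)`. -/
theorem stmt10 (α R b c K : ℝ) (p : ℝ → ℝ)
    (hb : 0 < b) (hc : c = 2 * b) (hR : 0 < R)
    (hsupp : ∀ x : ℝ, R < |x| → p x = 0)
    (hK : ∀ x : ℝ, |p x| ≤ K)
    (hKα : 2 * K < α) (hKhalf : K < 1 / 2)
    (x1 v1 x2 v2 : ℝ)
    (hfar : R + 1 ≤ |x1| ∨ R + 1 ≤ |x2|) :
    let a : ℝ := b + c * α
    let κ1 : ℝ := min (1 / 2 - K) ((α - 2 * K) / 2)
    -- components of B z1 - B z2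
    let u1 : ℝ := v1 - v2
    let u2 : ℝ := -(α * x1 + p x1) - v1 - (-(α * x2 + p x2) - v2)
    -- components of z1 - z2
    let w1 : ℝ := x1 - x2
    let w2 : ℝ := v1 - v2
    0 < κ1 ∧
    -(u1 * (a * w1 + b * w2) + u2 * (b * w1 + c * w2))
      ≥ c * κ1 * ((x1 - x2) ^ 2 + (v1 - v2) ^ 2) :=
  stmt10_general α R b c K p hb hc hsupp hK hKα hKhalf x1 v1 x2 v2 hfar
end
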